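/- arXiv:1002.1540 — 5 statements merged into one kernel-verified Lean document; each statement's English description precedes it below -/
import Mathlib

section
/- For every α ∈ (1,2) and every x > 0, ∫_x^∞ h_α(t) dt = Σ_{n=1}^∞ α·x^{1/α−n}/(Γ(αn)·Γ(1+1/α−n)) − Σ_{n=1}^∞ x^{−n/α}/(Γ(1−n/α)·n!), both series on the right-hand side converging absolutely. -/
open Real MeasureTheory Set

lemma abs_inv_Gamma_le {z : ℝ} (hz : z < 1) :
    |Real.Gamma z|⁻¹ ≤ Real.Gamma (1 - z) / π := by
  have h1z : 0 < 1 - z := by linarith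
  have hΓ1z : 0 < Real.Gamma (1 - z) := Real.Gamma_pos_of_pos h1z
  rcases eq_or_ne (Real.Gamma z) 0 with h | h
  · rw [h, abs_zero, inv_zero]; positivity
  · have hrefl := Real.Gamma_mul_Gamma_one_sub z
    have hsin : Real.sin (π * z) ≠ 0 := by
      intro h0
      rw [h0, div_zero] at hrefl
      rcases mul_eq_zero.1 hrefl with h' | h'
      · exact h h'
      · exact hΓ1z.ne' h'
    have key : Real.Gamma z * (Real.Gamma (1 - z) * Real.sin (π * z)) = π := by
      rw [← mul_assoc, hrefl]; field_simp
    have habs : |Real.Gamma z| * (Real.Gamma (1 - z) * |Real.sin (π * z)|) = π := by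
      have := congrArg abs key
      rwa [abs_mul, abs_mul, abs_of_pos hΓ1z, abs_of_pos Real.pi_pos] at this
    have hinv : |Real.Gamma z|⁻¹ = Real.Gamma (1 - z) * |Real.sin (π * z)| / π := by
      field_simp
      rw [mul_comm z π]; linarith [habs]
    rw [hinv]
    calc Real.Gamma (1 - z) * |Real.sin (π * z)| / π ≤ Real.Gamma (1 - z) * 1 / π := by
          gcongr
          exact abs_sin_le_one _
      _ = Real.Gamma (1 - z) / π := by ring

lemma gamma_mono : ∀ ⦃u v : ℝ⦄, 2 ≤ u → u ≤ v → Real.Gamma u ≤ Real.Gamma v := by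
  intro u v hu huv
  exact Real.Gamma_strictMonoOn_Ici.monotoneOn hu (le_trans hu huv) huv

lemma gamma_pow_le (M : ℕ) {s : ℝ} (hs : 0 < s) :
    s ^ M * Real.Gamma s ≤ Real.Gamma (s + M) := by
  induction M with
  | zero => simp
  | succ M ih =>
    have hsM : s + M ≠ 0 := by positivity
    have : Real.Gamma (s + (M + 1 : ℕ)) = (s + M) * Real.Gamma (s + M) := by
      rw [show (s + (M + 1 : ℕ)) = (s + M) + 1 by push_cast; ring, Real.Gamma_add_one hsM]
    rw [this]
    have hΓ : 0 < Real.Gamma (s + M) := Real.Gamma_pos_of_pos (by positivity)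
    calc s ^ (M + 1) * Real.Gamma s = s * (s ^ M * Real.Gamma s) := by ring
      _ ≤ s * Real.Gamma (s + M) := by
          have := ih
          nlinarith
      _ ≤ (s + M) * Real.Gamma (s + M) := by nlinarith [Nat.cast_nonneg (α := ℝ) M]

lemma gamma_le_pow (M : ℕ) {s : ℝ} (hs : 0 < s) :
    Real.Gamma (s + M) ≤ (s + M) ^ M * Real.Gamma s := by
  induction M with
  | zero => simp
  | succ M ih =>
    have hsM : s + M ≠ 0 := by positivity
    have hM : (0:ℝ) ≤ (M:ℝ) := Nat.cast_nonneg M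
    have heq : Real.Gamma (s + (M + 1 : ℕ)) = (s + M) * Real.Gamma (s + M) := by
      rw [show (s + (M + 1 : ℕ)) = (s + M) + 1 by push_cast; ring, Real.Gamma_add_one hsM]
    rw [heq]
    have hΓ : 0 < Real.Gamma s := Real.Gamma_pos_of_pos hs
    have h1 : (s + M) * Real.Gamma (s + M) ≤ (s + M) * ((s + M) ^ M * Real.Gamma s) := by
      have : (0:ℝ) < s + M := by positivity
      nlinarith
    refine h1.trans ?_
    have h2 : (s + M) ^ (M + 1) ≤ (s + (M + 1 : ℕ)) ^ (M + 1) := by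
      apply pow_le_pow_left₀ (by positivity)
      push_cast; linarith
    calc (s + M) * ((s + M) ^ M * Real.Gamma s) = (s + M) ^ (M + 1) * Real.Gamma s := by ring
      _ ≤ (s + (M + 1 : ℕ)) ^ (M + 1) * Real.Gamma s := by nlinarith

lemma summable_of_step {f : ℕ → ℝ} (hf : ∀ n, 0 ≤ f n) {k N : ℕ} (hk : 0 < k)
    (h : ∀ n, N ≤ n → f (n + k) ≤ 2⁻¹ * f n) : Summable f := by
  set C : ℝ := ∑ i ∈ Finset.range k, f (N + i) with hC
  have hC0 : 0 ≤ C := Finset.sum_nonneg fun i _ => hf _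
  have key : ∀ n, f (N + n) ≤ C * (2⁻¹ : ℝ) ^ (n / k) := by
    intro n
    induction n using Nat.strong_induction_on with
    | _ n ih =>
      rcases lt_or_ge n k with hn | hn
      · rw [Nat.div_eq_of_lt hn, pow_zero, mul_one]
        exact Finset.single_le_sum (f := fun i => f (N + i)) (fun i _ => hf _)
          (Finset.mem_range.2 hn)
      · have h1 : f (N + (n - k) + k) ≤ 2⁻¹ * f (N + (n - k)) := h _ (by omega)
        have h2 : f (N + (n - k)) ≤ C * (2⁻¹ : ℝ) ^ ((n - k) / k) := ih _ (by omega)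
        have h3 : N + (n - k) + k = N + n := by omega
        have h4 : (n - k) / k + 1 = n / k := by
          rw [← Nat.add_div_right _ hk]
          congr 1
          omega
        rw [h3] at h1
        calc f (N + n) ≤ 2⁻¹ * f (N + (n - k)) := h1
          _ ≤ 2⁻¹ * (C * (2⁻¹ : ℝ) ^ ((n - k) / k)) := by nlinarith
          _ = C * (2⁻¹ : ℝ) ^ ((n - k) / k + 1) := by ring
          _ = C * (2⁻¹ : ℝ) ^ (n / k) := by rw [h4]
  -- geometric comparison
  set q : ℝ := (2⁻¹ : ℝ) ^ ((k : ℝ)⁻¹) with hq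
  have hq0 : 0 ≤ q := Real.rpow_nonneg (by norm_num) _
  have hq1 : q < 1 := Real.rpow_lt_one (by norm_num) (by norm_num) (by positivity)
  have hbound : ∀ n : ℕ, (2⁻¹ : ℝ) ^ (n / k) ≤ 2 * q ^ n := by
    intro n
    have hnk : ((n / k : ℕ) : ℝ) > (n : ℝ) / (k : ℝ) - 1 := by
      have h5 : n < k * (n / k) + k := by
        have h7 := Nat.div_add_mod n k
        have h8 := Nat.mod_lt n hk
        omega
      have h6 : (n : ℝ) < k * ((n / k : ℕ) : ℝ) + k := by exact_mod_cast h5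
      have hk0 : (0:ℝ) < k := by positivity
      rw [gt_iff_lt, sub_lt_iff_lt_add, div_lt_iff₀ hk0]
      nlinarith
    have e1 : (2⁻¹ : ℝ) ^ (n / k) = (2⁻¹ : ℝ) ^ (((n / k : ℕ) : ℝ)) := by
      rw [Real.rpow_natCast]
    have e2 : (q : ℝ) ^ n = (2⁻¹ : ℝ) ^ ((k : ℝ)⁻¹ * n) := by
      rw [Real.rpow_mul (by norm_num), Real.rpow_natCast]
    have e3 : (2 : ℝ) * q ^ n = (2⁻¹ : ℝ) ^ ((k : ℝ)⁻¹ * n - 1) := by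
      rw [Real.rpow_sub (by norm_num), e2, Real.rpow_one]
      ring
    rw [e1, e3]
    apply Real.rpow_le_rpow_of_exponent_ge (by norm_num) (by norm_num)
    have hk0 : (0:ℝ) < k := by positivity
    rw [inv_mul_eq_div]
    linarith [hnk]
  rw [← summable_nat_add_iff N]
  refine Summable.of_nonneg_of_le (fun n => hf _) ?_
    (((summable_geometric_of_lt_one hq0 hq1).mul_left 2).mul_left C)
  · intro n
    calc f (n + N) = f (N + n) := by rw [Nat.add_comm]
      _ ≤ C * (2⁻¹ : ℝ) ^ (n / k) := key n
      _ ≤ C * (2 * q ^ n) := by nlinarith [hbound n, pow_nonneg hq0 n]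
lemma summable_gamma_ratio {r a b c d : ℝ} (hr : 0 < r) (hc : 0 < c) (hca : c < a)
    (hd : 0 < d) (hb : 0 < b) :
    Summable (fun n : ℕ => r ^ n * Real.Gamma (c * n + d) / Real.Gamma (a * n + b)) := by
  have ha : 0 < a := hc.trans hca
  have hpos : ∀ n : ℕ, 0 < r ^ n * Real.Gamma (c * n + d) / Real.Gamma (a * n + b) := by
    intro n
    have h1 : 0 < Real.Gamma (c * n + d) := Real.Gamma_pos_of_pos (by positivity)
    have h2 : 0 < Real.Gamma (a * n + b) := Real.Gamma_pos_of_pos (by positivity)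
    positivity
  -- choose k
  obtain ⟨k, hk⟩ := exists_nat_ge (3 / (a - c))
  have hac : 0 < a - c := by linarith
  have hk3 : 3 ≤ (k : ℝ) * (a - c) := by
    rw [div_le_iff₀ hac] at hk; linarith
  have hkpos : 0 < k := by
    by_contra h
    push_neg at h
    interval_cases k
    simp at hk3; nlinarith
  have hck : (0:ℝ) ≤ c * k := by positivity
  obtain ⟨m, hmle, hmlt⟩ : ∃ m : ℕ, c * k ≤ m ∧ (m : ℝ) < c * k + 1 :=
    ⟨⌈c * k⌉₊, Nat.le_ceil _, Nat.ceil_lt_add_one hck⟩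
  obtain ⟨M, hMle, hMgt⟩ : ∃ M : ℕ, (M : ℝ) ≤ a * k ∧ a * k < M + 1 :=
    ⟨⌊a * k⌋₊, Nat.floor_le (by positivity), Nat.lt_floor_add_one _⟩
  have hmM : m + 1 ≤ M := by
    have h' : (m : ℝ) + 1 < (M : ℝ) + 1 := by nlinarith
    have h'' : m + 1 < M + 1 := by exact_mod_cast h'
    omega
  -- eventual threshold
  obtain ⟨N, hN⟩ := exists_nat_ge (max (max ((2 - d) / c) ((2 - b) / a))
      (max ((d + m - b) / (a - c)) ((2 * r ^ k - b) / a)))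
  apply summable_of_step (fun n => (hpos n).le) hkpos (N := N)
  intro n hn
  have hnN : (N : ℝ) ≤ n := by exact_mod_cast hn
  have hn1 : 2 ≤ c * n + d := by
    have := (le_max_left _ _).trans (le_max_left _ _) |>.trans (hN.trans hnN)
    rw [div_le_iff₀ hc] at this; linarith
  have hn2 : 2 ≤ a * n + b := by
    have := (le_max_right _ _).trans (le_max_left _ _) |>.trans (hN.trans hnN)
    rw [div_le_iff₀ ha] at this; linarith
  have hn3 : c * n + d + m ≤ a * n + b := by
    have := (le_max_left _ _).trans (le_max_right _ _) |>.trans (hN.trans hnN)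
    rw [div_le_iff₀ hac] at this; nlinarith
  have hn4 : 2 * r ^ k ≤ a * n + b := by
    have := (le_max_right _ _).trans (le_max_right _ _) |>.trans (hN.trans hnN)
    rw [div_le_iff₀ ha] at this; linarith
  -- the chain
  have hcn : (0:ℝ) < c * n + d := by linarith
  have han : (0:ℝ) < a * n + b := by linarith
  have hG1 : 0 < Real.Gamma (c * n + d) := Real.Gamma_pos_of_pos hcn
  have hG2 : 0 < Real.Gamma (a * n + b) := Real.Gamma_pos_of_pos han
  have hexpc : c * ((n : ℝ) + k) + d = (c * n + d) + c * k := by ring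
  have hexpa : a * ((n : ℝ) + k) + b = (a * n + b) + a * k := by ring
  have hnum : Real.Gamma (c * ((n : ℝ) + k) + d) ≤ (a * n + b) ^ m * Real.Gamma (c * n + d) := by
    have step1 : Real.Gamma (c * ((n : ℝ) + k) + d) ≤ Real.Gamma ((c * n + d) + m) := by
      apply gamma_mono (by linarith) (by linarith)
    refine step1.trans ?_
    refine (gamma_le_pow m hcn).trans ?_
    exact mul_le_mul_of_nonneg_right (pow_le_pow_left₀ (by positivity) hn3 m) hG1.le
  have hden : (a * n + b) ^ (m + 1) * Real.Gamma (a * n + b)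
      ≤ Real.Gamma (a * ((n : ℝ) + k) + b) := by
    have step1 : Real.Gamma ((a * n + b) + M) ≤ Real.Gamma (a * ((n : ℝ) + k) + b) := by
      apply gamma_mono (by linarith [Nat.cast_nonneg (α := ℝ) M]) (by linarith)
    refine le_trans ?_ step1
    refine le_trans ?_ (gamma_pow_le M han)
    exact mul_le_mul_of_nonneg_right (pow_le_pow_right₀ (by linarith) hmM) hG2.le
  -- conclude
  have hGk1 : 0 < Real.Gamma (c * ((n:ℝ) + k) + d) := Real.Gamma_pos_of_pos (by positivity)
  have hGk2 : 0 < Real.Gamma (a * ((n:ℝ) + k) + b) := Real.Gamma_pos_of_pos (by positivity)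
  have hcast : ((n + k : ℕ) : ℝ) = (n : ℝ) + k := by push_cast; ring
  rw [show r ^ (n + k) * Real.Gamma (c * ((n + k : ℕ) : ℝ) + d) / Real.Gamma (a * ((n + k : ℕ) : ℝ) + b)
      = r ^ (n + k) * Real.Gamma (c * ((n:ℝ) + k) + d) / Real.Gamma (a * ((n:ℝ) + k) + b) by
    rw [hcast]]
  rw [div_le_iff₀ hGk2]
  have expand : 2⁻¹ * (r ^ n * Real.Gamma (c * ↑n + d) / Real.Gamma (a * ↑n + b))
      * Real.Gamma (a * ((n:ℝ) + k) + b)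
      = (2⁻¹ * r ^ n * Real.Gamma (c * ↑n + d) * Real.Gamma (a * ((n:ℝ) + k) + b))
        / Real.Gamma (a * ↑n + b) := by ring
  rw [expand, le_div_iff₀ hG2]
  -- goal : r^(n+k) * Γnum' * Γ(an+b) ≤ 2⁻¹ r^n Γ(cn+d) Γ(aden') 
  have key1 : r ^ (n + k) * Real.Gamma (c * ((n:ℝ) + k) + d) * Real.Gamma (a * ↑n + b)
      ≤ r ^ (n + k) * ((a * n + b) ^ m * Real.Gamma (c * n + d)) * Real.Gamma (a * ↑n + b) := by
    exact mul_le_mul_of_nonneg_right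
      (mul_le_mul_of_nonneg_left hnum (by positivity)) hG2.le
  refine key1.trans ?_
  have key2 : 2⁻¹ * r ^ n * Real.Gamma (c * ↑n + d) * ((a * n + b) ^ (m+1) * Real.Gamma (a * ↑n + b))
      ≤ 2⁻¹ * r ^ n * Real.Gamma (c * ↑n + d) * Real.Gamma (a * ((n:ℝ) + k) + b) := by
    exact mul_le_mul_of_nonneg_left hden (by positivity)
  refine le_trans ?_ key2
  -- now pure algebra: r^(n+k) * (A^m * G1) * G2 ≤ 2⁻¹ r^n G1 (A^(m+1) G2)
  calc r ^ (n + k) * ((a * n + b) ^ m * Real.Gamma (c * ↑n + d)) * Real.Gamma (a * ↑n + b)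
      = (r ^ n * Real.Gamma (c * ↑n + d) * Real.Gamma (a * ↑n + b) * (a*n+b)^m) * r ^ k := by
        rw [pow_add]; ring
    _ ≤ (r ^ n * Real.Gamma (c * ↑n + d) * Real.Gamma (a * ↑n + b) * (a*n+b)^m) * (2⁻¹ * (a*n+b)) := by
        have h0 : 0 ≤ r ^ n * Real.Gamma (c * ↑n + d) * Real.Gamma (a * ↑n + b) * (a*n+b)^m := by
          positivity
        exact mul_le_mul_of_nonneg_left (by linarith) h0
    _ = 2⁻¹ * r ^ n * Real.Gamma (c * ↑n + d) * ((a * n + b) ^ (m+1) * Real.Gamma (a * ↑n + b)) := by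
        rw [pow_succ]; ring
lemma B1 (α x : ℝ) (hα1 : 1 < α) (hα2 : α < 2) (hx : 0 < x) (e e' : ℝ) (he' : e' ≤ 1) :
    Summable fun n : ℕ => |x ^ (1/α - ((n:ℝ)+1) + e) /
      (Real.Gamma (α * ((n:ℝ)+1)) * Real.Gamma (1/α - ((n:ℝ)+1) + e'))| := by
  have hα0 : 0 < α := by linarith
  have h1α : 0 < 1/α := by positivity
  have h1α1 : 1/α < 1 := by rw [div_lt_one hα0]; linarith
  set d : ℝ := 2 - 1/α - e' with hd
  have hd0 : 0 < d := by simp only [hd]; linarith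
  set K : ℝ := x ^ (1/α - 1 + e) / π with hK
  refine Summable.of_nonneg_of_le (fun n => abs_nonneg _) ?_
    ((summable_gamma_ratio (r := x⁻¹) (a := α) (b := α) (c := 1) (d := d)
      (by positivity) one_pos hα1 hd0 hα0).mul_left K)
  intro n
  have hn0 : (0:ℝ) ≤ (n:ℝ) := Nat.cast_nonneg n
  have hZ : 1/α - ((n:ℝ)+1) + e' < 1 := by linarith
  have hA : (0:ℝ) < α * ((n:ℝ)+1) := by positivity
  have hΓA : 0 < Real.Gamma (α * ((n:ℝ)+1)) := Real.Gamma_pos_of_pos hA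
  have hxp : (0:ℝ) < x ^ (1/α - ((n:ℝ)+1) + e) := Real.rpow_pos_of_pos hx _
  have ex : x ^ (1/α - ((n:ℝ)+1) + e) = x ^ (1/α - 1 + e) * (x⁻¹) ^ n := by
    rw [← Real.rpow_natCast x⁻¹ n, ← Real.rpow_neg_one x, ← Real.rpow_mul hx.le,
      ← Real.rpow_add hx]
    congr 1
    ring
  calc |x ^ (1/α - ((n:ℝ)+1) + e) /
        (Real.Gamma (α * ((n:ℝ)+1)) * Real.Gamma (1/α - ((n:ℝ)+1) + e'))|
      = x ^ (1/α - ((n:ℝ)+1) + e) *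
        ((Real.Gamma (α * ((n:ℝ)+1)))⁻¹ * |Real.Gamma (1/α - ((n:ℝ)+1) + e')|⁻¹) := by
        rw [abs_div, abs_mul, abs_of_pos hxp, abs_of_pos hΓA, div_eq_mul_inv, mul_inv]
    _ ≤ x ^ (1/α - ((n:ℝ)+1) + e) *
        ((Real.Gamma (α * ((n:ℝ)+1)))⁻¹ * (Real.Gamma (1 - (1/α - ((n:ℝ)+1) + e')) / π)) := by
        gcongr
        exact abs_inv_Gamma_le hZ
    _ = K * (x⁻¹ ^ n * Real.Gamma (1 * (n:ℝ) + d) / Real.Gamma (α * (n:ℝ) + α)) := by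
        rw [show (1 - (1/α - ((n:ℝ)+1) + e')) = 1 * (n:ℝ) + d by simp only [hd]; ring,
          show α * ((n:ℝ)+1) = α * (n:ℝ) + α by ring, ex, hK]
        ring

lemma B2 (α x : ℝ) (hα1 : 1 < α) (hα2 : α < 2) (hx : 0 < x) (e e' : ℝ) (he' : e' ≤ 1) :
    Summable fun n : ℕ => |x ^ (-((n:ℝ)+1)/α + e) /
      (Real.Gamma (-((n:ℝ)+1)/α + e') * ((Nat.factorial (n+1) : ℝ)))| := by
  have hα0 : 0 < α := by linarith
  have h1α : 0 < 1/α := by positivity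
  have h1α1 : 1/α < 1 := by rw [div_lt_one hα0]; linarith
  set d : ℝ := 1 - e' + 1/α with hd
  have hd0 : 0 < d := by simp only [hd]; linarith
  set K : ℝ := x ^ (-1/α + e) / π with hK
  have hr : (0:ℝ) < x ^ (-1/α) := Real.rpow_pos_of_pos hx _
  refine Summable.of_nonneg_of_le (fun n => abs_nonneg _) ?_
    ((summable_gamma_ratio (r := x ^ (-1/α)) (a := 1) (b := 2) (c := 1/α) (d := d)
      hr h1α h1α1 hd0 two_pos).mul_left K)
  intro n
  have hn0 : (0:ℝ) ≤ (n:ℝ) := Nat.cast_nonneg n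
  have hn1α : 0 < ((n:ℝ)+1)/α := by positivity
  have hZ : -((n:ℝ)+1)/α + e' < 1 := by
    have : -((n:ℝ)+1)/α < 0 := by rw [neg_div]; linarith
    linarith
  have hm : (0:ℝ) < ((Nat.factorial (n+1) : ℕ) : ℝ) := by
    exact_mod_cast Nat.factorial_pos (n+1)
  have hxp : (0:ℝ) < x ^ (-((n:ℝ)+1)/α + e) := Real.rpow_pos_of_pos hx _
  have ex : x ^ (-((n:ℝ)+1)/α + e) = x ^ (-1/α + e) * (x ^ (-1/α)) ^ n := by
    rw [← Real.rpow_natCast (x ^ (-1/α)) n, ← Real.rpow_mul hx.le, ← Real.rpow_add hx]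
    congr 1
    field_simp
    ring
  have efact : ((Nat.factorial (n+1) : ℕ) : ℝ) = Real.Gamma (1 * (n:ℝ) + 2) := by
    rw [show (1 * (n:ℝ) + 2) = ((n+1:ℕ):ℝ) + 1 by push_cast; ring,
      Real.Gamma_nat_eq_factorial]
  calc |x ^ (-((n:ℝ)+1)/α + e) /
        (Real.Gamma (-((n:ℝ)+1)/α + e') * ((Nat.factorial (n+1) : ℕ) : ℝ))|
      = x ^ (-((n:ℝ)+1)/α + e) *
        (|Real.Gamma (-((n:ℝ)+1)/α + e')|⁻¹ * (((Nat.factorial (n+1) : ℕ) : ℝ))⁻¹) := by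
        rw [abs_div, abs_mul, abs_of_pos hxp, abs_of_pos hm, div_eq_mul_inv, mul_inv]
    _ ≤ x ^ (-((n:ℝ)+1)/α + e) *
        ((Real.Gamma (1 - (-((n:ℝ)+1)/α + e')) / π) * (((Nat.factorial (n+1) : ℕ) : ℝ))⁻¹) := by
        gcongr
        exact abs_inv_Gamma_le hZ
    _ = K * ((x ^ (-1/α)) ^ n * Real.Gamma (1/α * (n:ℝ) + d) / Real.Gamma (1 * (n:ℝ) + 2)) := by
        rw [show (1 - (-((n:ℝ)+1)/α + e')) = 1/α * (n:ℝ) + d by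
          simp only [hd]; field_simp; ring, efact, ex, hK]
        ring


/-- The density `h_α` of the first hitting time of level 1 by a normalized
spectrally positive `α`-stable Lévy process. -/
noncomputable def hittingDensity (α x : ℝ) : ℝ :=
  (∑' n : ℕ, (-α) * x ^ (1 / α - ((n : ℝ) + 1) - 1) /
      (Real.Gamma (α * ((n : ℝ) + 1)) * Real.Gamma (1 / α - ((n : ℝ) + 1))))
  + ∑' n : ℕ, x ^ (-((n : ℝ) + 1) / α - 1) /
      (Real.Gamma (-((n : ℝ) + 1) / α) * (Nat.factorial (n + 1) : ℝ))

set_option maxHeartbeats 1000000 in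
/-- For every `α ∈ (1,2)` and every `x > 0`,
`∫_x^∞ h_α(t) dt = Σ_{n≥1} α x^{1/α−n}/(Γ(αn)Γ(1+1/α−n)) − Σ_{n≥1} x^{−n/α}/(Γ(1−n/α) n!)`,
both series on the right-hand side converging absolutely. -/
theorem stmt_8 (α : ℝ) (hα : α ∈ Set.Ioo (1 : ℝ) 2) (x : ℝ) (hx : 0 < x) :
    Summable (fun n : ℕ => |α * x ^ (1 / α - ((n : ℝ) + 1)) /
        (Real.Gamma (α * ((n : ℝ) + 1)) * Real.Gamma (1 + 1 / α - ((n : ℝ) + 1)))|) ∧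
    Summable (fun n : ℕ => |x ^ (-((n : ℝ) + 1) / α) /
        (Real.Gamma (1 - ((n : ℝ) + 1) / α) * (Nat.factorial (n + 1) : ℝ))|) ∧
    ∫ t in Set.Ioi x, hittingDensity α t
      = (∑' n : ℕ, α * x ^ (1 / α - ((n : ℝ) + 1)) /
            (Real.Gamma (α * ((n : ℝ) + 1)) * Real.Gamma (1 + 1 / α - ((n : ℝ) + 1))))
        - ∑' n : ℕ, x ^ (-((n : ℝ) + 1) / α) /
            (Real.Gamma (1 - ((n : ℝ) + 1) / α) * (Nat.factorial (n + 1) : ℝ)) := by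
  obtain ⟨hα1, hα2⟩ := hα
  have hα0 : (0:ℝ) < α := by linarith
  have h1α : (0:ℝ) < 1/α := by positivity
  have h1α1 : 1/α < 1 := by rw [div_lt_one hα0]; linarith
  -- S1
  have hS1 : Summable (fun n : ℕ => |α * x ^ (1 / α - ((n : ℝ) + 1)) /
      (Real.Gamma (α * ((n : ℝ) + 1)) * Real.Gamma (1 + 1 / α - ((n : ℝ) + 1)))|) := by
    refine ((B1 α x hα1 hα2 hx 0 1 le_rfl).mul_left α).congr fun n => ?_
    rw [add_zero, show 1/α - ((n:ℝ)+1) + 1 = 1 + 1/α - ((n:ℝ)+1) by ring,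
      mul_div_assoc, abs_mul, abs_of_pos hα0]
  -- S2
  have hS2 : Summable (fun n : ℕ => |x ^ (-((n : ℝ) + 1) / α) /
      (Real.Gamma (1 - ((n : ℝ) + 1) / α) * (Nat.factorial (n + 1) : ℝ))|) := by
    refine (B2 α x hα1 hα2 hx 0 1 le_rfl).congr fun n => ?_
    rw [add_zero, show -((n:ℝ)+1)/α + 1 = 1 - ((n:ℝ)+1)/α by ring]
  refine ⟨hS1, hS2, ?_⟩
  -- the summand functions
  set F : ℕ → ℝ → ℝ := fun n t => ((-α) / (Real.Gamma (α * ((n:ℝ)+1)) *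
      Real.Gamma (1/α - ((n:ℝ)+1)))) * t ^ (1/α - ((n:ℝ)+1) - 1) with hF
  set G : ℕ → ℝ → ℝ := fun n t => (1 / (Real.Gamma (-((n:ℝ)+1)/α) *
      (Nat.factorial (n+1) : ℝ))) * t ^ (-((n:ℝ)+1)/α - 1) with hG
  have hsneF : ∀ n : ℕ, Real.Gamma (1/α - ((n:ℝ)+1)) ≠ 0 := by
    intro n
    apply Real.Gamma_ne_zero
    intro m h
    rcases le_or_gt m n with hm | hm
    · have : (m:ℝ) ≤ n := by exact_mod_cast hm
      linarith
    · have : (n:ℝ) + 1 ≤ m := by exact_mod_cast hm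
      linarith
  have hΓApos : ∀ n : ℕ, 0 < Real.Gamma (α * ((n:ℝ)+1)) := by
    intro n
    apply Real.Gamma_pos_of_pos
    have : (0:ℝ) ≤ (n:ℝ) := Nat.cast_nonneg n
    positivity
  have hfactpos : ∀ n : ℕ, (0:ℝ) < (Nat.factorial (n+1) : ℝ) := by
    intro n; exact_mod_cast Nat.factorial_pos (n+1)
  -- pointwise summability
  have hFsummable : ∀ t : ℝ, 0 < t → Summable (fun n => F n t) := by
    intro t ht
    apply Summable.of_abs
    refine ((B1 α t hα1 hα2 ht (-1) 0 (by norm_num)).mul_left α).congr fun n => ?_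
    simp only [hF]
    rw [add_zero, show 1/α - ((n:ℝ)+1) + (-1) = 1/α - ((n:ℝ)+1) - 1 by ring]
    rw [show ((-α) / (Real.Gamma (α * ((n:ℝ)+1)) * Real.Gamma (1/α - ((n:ℝ)+1)))) *
        t ^ (1/α - ((n:ℝ)+1) - 1) = (-α) * (t ^ (1/α - ((n:ℝ)+1) - 1) /
        (Real.Gamma (α * ((n:ℝ)+1)) * Real.Gamma (1/α - ((n:ℝ)+1)))) by ring,
      abs_mul, abs_neg, abs_of_pos hα0]
  have hGsummable : ∀ t : ℝ, 0 < t → Summable (fun n => G n t) := by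
    intro t ht
    apply Summable.of_abs
    refine (B2 α t hα1 hα2 ht (-1) 0 (by norm_num)).congr fun n => ?_
    simp only [hG]
    rw [add_zero, show -((n:ℝ)+1)/α + (-1) = -((n:ℝ)+1)/α - 1 by ring]
    rw [show (1 / (Real.Gamma (-((n:ℝ)+1)/α) * (Nat.factorial (n+1) : ℝ))) *
        t ^ (-((n:ℝ)+1)/α - 1) = t ^ (-((n:ℝ)+1)/α - 1) /
        (Real.Gamma (-((n:ℝ)+1)/α) * (Nat.factorial (n+1) : ℝ)) by ring]
  -- integrability
  have hpF : ∀ n : ℕ, 1/α - ((n:ℝ)+1) - 1 < -1 := by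
    intro n
    have : (0:ℝ) ≤ (n:ℝ) := Nat.cast_nonneg n
    linarith
  have hpG : ∀ n : ℕ, -((n:ℝ)+1)/α - 1 < -1 := by
    intro n
    have h0 : (0:ℝ) < ((n:ℝ)+1)/α := by positivity
    rw [neg_div]
    linarith
  have hFint : ∀ n : ℕ, IntegrableOn (F n) (Set.Ioi x) := by
    intro n
    exact (integrableOn_Ioi_rpow_of_lt (hpF n) hx).const_mul _
  have hGint : ∀ n : ℕ, IntegrableOn (G n) (Set.Ioi x) := by
    intro n
    exact (integrableOn_Ioi_rpow_of_lt (hpG n) hx).const_mul _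
  -- norm integrals
  have normint : ∀ (C p : ℝ), p < -1 →
      (∫ t in Set.Ioi x, ‖C * t ^ p‖) = |C| * (-x ^ (p+1) / (p+1)) := by
    intro C p hp
    have h1 : Set.EqOn (fun t => ‖C * t ^ p‖) (fun t => |C| * t ^ p) (Set.Ioi x) := by
      intro t ht
      simp only [norm_mul, Real.norm_eq_abs]
      rw [abs_of_nonneg (Real.rpow_nonneg (hx.trans ht).le p)]
    rw [setIntegral_congr_fun measurableSet_Ioi h1, integral_const_mul,
      integral_Ioi_rpow_of_lt hp hx]
  -- norm integral formulas
  have hFnormeq : ∀ n : ℕ, (∫ t in Set.Ioi x, ‖F n t‖) =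
      |(-α) / (Real.Gamma (α * ((n:ℝ)+1)) * Real.Gamma (1/α - ((n:ℝ)+1)))| *
        (-x ^ ((1/α - ((n:ℝ)+1) - 1) + 1) / ((1/α - ((n:ℝ)+1) - 1) + 1)) := by
    intro n
    simp only [hF]
    exact normint _ _ (hpF n)
  have hGnormeq : ∀ n : ℕ, (∫ t in Set.Ioi x, ‖G n t‖) =
      |1 / (Real.Gamma (-((n:ℝ)+1)/α) * (Nat.factorial (n+1) : ℝ))| *
        (-x ^ ((-((n:ℝ)+1)/α - 1) + 1) / ((-((n:ℝ)+1)/α - 1) + 1)) := by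
    intro n
    simp only [hG]
    exact normint _ _ (hpG n)
  -- summability of norm integrals
  have hsFnorm : Summable (fun n => ∫ t in Set.Ioi x, ‖F n t‖) := by
    refine Summable.of_nonneg_of_le
      (fun n => integral_nonneg fun t => norm_nonneg _) (fun n => ?_)
      ((B1 α x hα1 hα2 hx 0 0 (by norm_num)).mul_left ((1 - 1/α)⁻¹ * α))
    rw [hFnormeq n, show (1/α - ((n:ℝ)+1) - 1) + 1 = 1/α - ((n:ℝ)+1) by ring, add_zero]
    have hn0 : (0:ℝ) ≤ (n:ℝ) := Nat.cast_nonneg n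
    have hxs : (0:ℝ) < x ^ (1/α - ((n:ℝ)+1)) := Real.rpow_pos_of_pos hx _
    have hD : 0 < Real.Gamma (α * ((n:ℝ)+1)) * |Real.Gamma (1/α - ((n:ℝ)+1))| :=
      mul_pos (hΓApos n) (abs_pos.2 (hsneF n))
    have e1 : |(-α) / (Real.Gamma (α * ((n:ℝ)+1)) * Real.Gamma (1/α - ((n:ℝ)+1)))| =
        α / (Real.Gamma (α * ((n:ℝ)+1)) * |Real.Gamma (1/α - ((n:ℝ)+1))|) := by
      rw [abs_div, abs_neg, abs_of_pos hα0, abs_mul, abs_of_pos (hΓApos n)]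
    have e2 : |x ^ (1/α - ((n:ℝ)+1)) /
        (Real.Gamma (α * ((n:ℝ)+1)) * Real.Gamma (1/α - ((n:ℝ)+1)))| =
        x ^ (1/α - ((n:ℝ)+1)) /
          (Real.Gamma (α * ((n:ℝ)+1)) * |Real.Gamma (1/α - ((n:ℝ)+1))|) := by
      rw [abs_div, abs_of_pos hxs, abs_mul, abs_of_pos (hΓApos n)]
    rw [e1, e2, neg_div, ← div_neg, show -(1/α - ((n:ℝ)+1)) = ((n:ℝ)+1) - 1/α by ring]
    have hinv : (((n:ℝ)+1) - 1/α)⁻¹ ≤ (1 - 1/α)⁻¹ := by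
      apply inv_anti₀ (by linarith) (by linarith)
    calc α / (Real.Gamma (α * ((n:ℝ)+1)) * |Real.Gamma (1/α - ((n:ℝ)+1))|) *
          (x ^ (1/α - ((n:ℝ)+1)) / (((n:ℝ)+1) - 1/α))
        = (α * (x ^ (1/α - ((n:ℝ)+1)) /
            (Real.Gamma (α * ((n:ℝ)+1)) * |Real.Gamma (1/α - ((n:ℝ)+1))|))) *
            (((n:ℝ)+1) - 1/α)⁻¹ := by ring
      _ ≤ (α * (x ^ (1/α - ((n:ℝ)+1)) /
            (Real.Gamma (α * ((n:ℝ)+1)) * |Real.Gamma (1/α - ((n:ℝ)+1))|))) *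
            (1 - 1/α)⁻¹ := by
          apply mul_le_mul_of_nonneg_left hinv (by positivity)
      _ = (1 - 1/α)⁻¹ * α * (x ^ (1/α - ((n:ℝ)+1)) /
            (Real.Gamma (α * ((n:ℝ)+1)) * |Real.Gamma (1/α - ((n:ℝ)+1))|)) := by ring
  have hsGnorm : Summable (fun n => ∫ t in Set.Ioi x, ‖G n t‖) := by
    refine Summable.of_nonneg_of_le
      (fun n => integral_nonneg fun t => norm_nonneg _) (fun n => ?_)
      ((B2 α x hα1 hα2 hx 0 0 (by norm_num)).mul_left α)
    rw [hGnormeq n, show (-((n:ℝ)+1)/α - 1) + 1 = -((n:ℝ)+1)/α by ring, add_zero]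
    have hn0 : (0:ℝ) ≤ (n:ℝ) := Nat.cast_nonneg n
    have hxs : (0:ℝ) < x ^ (-((n:ℝ)+1)/α) := Real.rpow_pos_of_pos hx _
    have e1 : |1 / (Real.Gamma (-((n:ℝ)+1)/α) * (Nat.factorial (n+1) : ℝ))| =
        1 / (|Real.Gamma (-((n:ℝ)+1)/α)| * (Nat.factorial (n+1) : ℝ)) := by
      rw [abs_div, abs_one, abs_mul, abs_of_pos (hfactpos n)]
    have e2 : |x ^ (-((n:ℝ)+1)/α) /
        (Real.Gamma (-((n:ℝ)+1)/α) * (Nat.factorial (n+1) : ℝ))| =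
        x ^ (-((n:ℝ)+1)/α) /
          (|Real.Gamma (-((n:ℝ)+1)/α)| * (Nat.factorial (n+1) : ℝ)) := by
      rw [abs_div, abs_of_pos hxs, abs_mul, abs_of_pos (hfactpos n)]
    rw [e1, e2, show -x ^ (-((n:ℝ)+1)/α) / (-((n:ℝ)+1)/α)
      = x ^ (-((n:ℝ)+1)/α) / (((n:ℝ)+1)/α) from by
        rw [neg_div α ((n:ℝ)+1), div_neg, neg_div, neg_neg]]
    have hinv : (((n:ℝ)+1)/α)⁻¹ ≤ α := by
      rw [inv_div]
      exact div_le_self hα0.le (by linarith)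
    calc 1 / (|Real.Gamma (-((n:ℝ)+1)/α)| * (Nat.factorial (n+1) : ℝ)) *
          (x ^ (-((n:ℝ)+1)/α) / (((n:ℝ)+1)/α))
        = (x ^ (-((n:ℝ)+1)/α) /
            (|Real.Gamma (-((n:ℝ)+1)/α)| * (Nat.factorial (n+1) : ℝ))) *
            (((n:ℝ)+1)/α)⁻¹ := by ring
      _ ≤ (x ^ (-((n:ℝ)+1)/α) /
            (|Real.Gamma (-((n:ℝ)+1)/α)| * (Nat.factorial (n+1) : ℝ))) * α := by
          apply mul_le_mul_of_nonneg_left hinv (by positivity)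
      _ = α * (x ^ (-((n:ℝ)+1)/α) /
            (|Real.Gamma (-((n:ℝ)+1)/α)| * (Nat.factorial (n+1) : ℝ))) := by ring
  -- summability of the integrals themselves
  have hsF : Summable (fun n => ∫ t in Set.Ioi x, F n t) := by
    refine Summable.of_abs (Summable.of_nonneg_of_le (fun n => abs_nonneg _)
      (fun n => ?_) hsFnorm)
    rw [← Real.norm_eq_abs]
    exact norm_integral_le_integral_norm _
  have hsG : Summable (fun n => ∫ t in Set.Ioi x, G n t) := by
    refine Summable.of_abs (Summable.of_nonneg_of_le (fun n => abs_nonneg _)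
      (fun n => ?_) hsGnorm)
    rw [← Real.norm_eq_abs]
    exact norm_integral_le_integral_norm _
  -- summability of norms of sums
  have hnormsum : Summable (fun n => ∫ t in Set.Ioi x, ‖F n t + G n t‖) := by
    refine Summable.of_nonneg_of_le
      (fun n => integral_nonneg fun t => norm_nonneg _) (fun n => ?_) (hsFnorm.add hsGnorm)
    rw [← integral_add (hFint n).norm (hGint n).norm]
    exact integral_mono ((hFint n).add (hGint n)).norm
      ((hFint n).norm.add (hGint n).norm) (fun t => norm_add_le _ _)
  -- evaluation of the integrals
  have hFeval : ∀ n : ℕ, (∫ t in Set.Ioi x, F n t) = α * x ^ (1/α - ((n:ℝ)+1)) /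
      (Real.Gamma (α * ((n:ℝ)+1)) * Real.Gamma (1 + 1/α - ((n:ℝ)+1))) := by
    intro n
    have hn0 : (0:ℝ) ≤ (n:ℝ) := Nat.cast_nonneg n
    have hsne0 : 1/α - ((n:ℝ)+1) ≠ 0 := ne_of_lt (by linarith)
    simp only [hF]
    rw [integral_const_mul, integral_Ioi_rpow_of_lt (hpF n) hx,
      show (1/α - ((n:ℝ)+1) - 1) + 1 = 1/α - ((n:ℝ)+1) by ring,
      show 1 + 1/α - ((n:ℝ)+1) = (1/α - ((n:ℝ)+1)) + 1 by ring,
      Real.Gamma_add_one hsne0]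
    field_simp [(hΓApos n).ne', hsneF n]
  have hGeval : ∀ n : ℕ, (∫ t in Set.Ioi x, G n t) = -(x ^ (-((n:ℝ)+1)/α) /
      (Real.Gamma (1 - ((n:ℝ)+1)/α) * (Nat.factorial (n+1) : ℝ))) := by
    intro n
    have hn0 : (0:ℝ) ≤ (n:ℝ) := Nat.cast_nonneg n
    have hu0 : -((n:ℝ)+1)/α < 0 := by
      rw [neg_div]
      have : 0 < ((n:ℝ)+1)/α := by positivity
      linarith
    simp only [hG]
    rw [integral_const_mul, integral_Ioi_rpow_of_lt (hpG n) hx,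
      show (-((n:ℝ)+1)/α - 1) + 1 = -((n:ℝ)+1)/α by ring,
      show 1 - ((n:ℝ)+1)/α = (-((n:ℝ)+1)/α) + 1 by ring,
      Real.Gamma_add_one hu0.ne]
    rcases eq_or_ne (Real.Gamma (-((n:ℝ)+1)/α)) 0 with h0 | h0
    · rw [h0]
      simp only [zero_mul, mul_zero, div_zero, zero_div, neg_zero]
    · field_simp
  -- splitting the density
  have hsplit : Set.EqOn (hittingDensity α) (fun t => ∑' n, (F n t + G n t)) (Set.Ioi x) := by
    intro t ht
    have ht0 : 0 < t := hx.trans ht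
    show hittingDensity α t = ∑' n, (F n t + G n t)
    unfold hittingDensity
    rw [show (∑' n : ℕ, (-α) * t ^ (1 / α - ((n : ℝ) + 1) - 1) /
          (Real.Gamma (α * ((n : ℝ) + 1)) * Real.Gamma (1 / α - ((n : ℝ) + 1))))
        = ∑' n, F n t from tsum_congr fun n => by simp only [hF]; ring,
      show (∑' n : ℕ, t ^ (-((n : ℝ) + 1) / α - 1) /
          (Real.Gamma (-((n : ℝ) + 1) / α) * (Nat.factorial (n + 1) : ℝ)))
        = ∑' n, G n t from tsum_congr fun n => by simp only [hG]; ring,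
      ← Summable.tsum_add (hFsummable t ht0) (hGsummable t ht0)]
  -- final computation
  calc ∫ t in Set.Ioi x, hittingDensity α t
      = ∫ t in Set.Ioi x, ∑' n, (F n t + G n t) :=
        setIntegral_congr_fun measurableSet_Ioi hsplit
    _ = ∑' n, ∫ t in Set.Ioi x, (F n t + G n t) :=
        (integral_tsum_of_summable_integral_norm
          (fun n => (hFint n).add (hGint n)) hnormsum).symm
    _ = ∑' n, ((∫ t in Set.Ioi x, F n t) + ∫ t in Set.Ioi x, G n t) :=
        tsum_congr fun n => integral_add (hFint n) (hGint n)
    _ = (∑' n, ∫ t in Set.Ioi x, F n t) + ∑' n, ∫ t in Set.Ioi x, G n t :=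
        Summable.tsum_add hsF hsG
    _ = (∑' n : ℕ, α * x ^ (1/α - ((n:ℝ)+1)) /
          (Real.Gamma (α * ((n:ℝ)+1)) * Real.Gamma (1 + 1/α - ((n:ℝ)+1))))
        + ∑' n : ℕ, -(x ^ (-((n:ℝ)+1)/α) /
          (Real.Gamma (1 - ((n:ℝ)+1)/α) * (Nat.factorial (n+1) : ℝ))) := by
        rw [tsum_congr hFeval, tsum_congr hGeval]
    _ = (∑' n : ℕ, α * x ^ (1/α - ((n:ℝ)+1)) /
          (Real.Gamma (α * ((n:ℝ)+1)) * Real.Gamma (1 + 1/α - ((n:ℝ)+1))))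
        - ∑' n : ℕ, x ^ (-((n:ℝ)+1)/α) /
          (Real.Gamma (1 - ((n:ℝ)+1)/α) * (Nat.factorial (n+1) : ℝ)) := by
        rw [tsum_neg]
        ring
end

section
/- For every α ∈ (1,2), the quadratic (1−2α)t² + 2(α−1)·cos(πα)·t + 1 has a unique root a in (0,∞), and the function f_{U_α} is strictly increasing on (0,a] and strictly decreasing on [a,∞); in particular f_{U_α} is unimodal with mode a. -/
set_option maxHeartbeats 1000000


open Real Set

/-- For every `α ∈ (1,2)`, the quadratic
`(1−2α)t² + 2(α−1)cos(πα)t + 1` has a unique root `a` in `(0,∞)`, and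
`f_{U_α}(t) = −sin(πα) t^{1/α}/(π(t² − 2t cos(πα) + 1))` is strictly increasing on
`(0,a]` and strictly decreasing on `[a,∞)`; in particular `f_{U_α}` is unimodal
with mode `a`. -/
theorem stmt_16 (α : ℝ) (hα : α ∈ Set.Ioo (1 : ℝ) 2) :
    ∃ a : ℝ, 0 < a ∧
      (1 - 2 * α) * a ^ 2 + 2 * (α - 1) * Real.cos (π * α) * a + 1 = 0 ∧
      (∀ t : ℝ, 0 < t →
        (1 - 2 * α) * t ^ 2 + 2 * (α - 1) * Real.cos (π * α) * t + 1 = 0 → t = a) ∧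
      StrictMonoOn
        (fun t : ℝ => -Real.sin (π * α) * t ^ (1 / α) /
          (π * (t ^ 2 - 2 * t * Real.cos (π * α) + 1))) (Set.Ioc 0 a) ∧
      StrictAntiOn
        (fun t : ℝ => -Real.sin (π * α) * t ^ (1 / α) /
          (π * (t ^ 2 - 2 * t * Real.cos (π * α) + 1))) (Set.Ici a) := by
  obtain ⟨h1, h2⟩ := hα
  have hπ := Real.pi_pos
  set c := Real.cos (π * α) with hc
  have hα0 : (0:ℝ) < α := by linarith
  have hsin : Real.sin (π * α) < 0 := by
    have h0 : 0 < Real.sin (π * α - π) :=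
      Real.sin_pos_of_pos_of_lt_pi (by nlinarith) (by nlinarith)
    have h3 := Real.sin_sub_pi (π * α)
    linarith
  have hc2 : c ^ 2 < 1 := by
    have h := Real.sin_sq_add_cos_sq (π * α)
    nlinarith [mul_pos_of_neg_of_neg hsin hsin]
  have hq : ∀ t : ℝ, 0 < t ^ 2 - 2 * t * c + 1 := fun t => by
    nlinarith [sq_nonneg (t - c)]
  set s := Real.sqrt ((α - 1) ^ 2 * c ^ 2 + (2 * α - 1)) with hsdef
  have hs0 : 0 ≤ s := Real.sqrt_nonneg _
  have hs2 : s ^ 2 = (α - 1) ^ 2 * c ^ 2 + (2 * α - 1) :=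
    Real.sq_sqrt (by nlinarith)
  have hslt : (α - 1) * c < s ∧ -s < (α - 1) * c := by
    constructor <;> nlinarith [sq_nonneg (s - (α - 1) * c), sq_nonneg (s + (α - 1) * c)]
  set a := ((α - 1) * c + s) / (2 * α - 1) with hadef
  have h2α : (0:ℝ) < 2 * α - 1 := by linarith
  have ha_pos : 0 < a := div_pos (by linarith [hslt.2]) h2α
  have hua : (2 * α - 1) * a - (α - 1) * c = s := by
    have h0 : a * (2 * α - 1) = (α - 1) * c + s := div_mul_cancel₀ _ (ne_of_gt h2α)
    linear_combination h0
  have key : ∀ t : ℝ, (2 * α - 1) * ((1 - 2 * α) * t ^ 2 + 2 * (α - 1) * c * t + 1)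
      = s ^ 2 - ((2 * α - 1) * t - (α - 1) * c) ^ 2 := by
    intro t; rw [hs2]; ring
  have ha_root : (1 - 2 * α) * a ^ 2 + 2 * (α - 1) * c * a + 1 = 0 := by
    have := key a
    rw [hua] at this
    have h0 : (2 * α - 1) * ((1 - 2 * α) * a ^ 2 + 2 * (α - 1) * c * a + 1) = 0 := by
      rw [this]; ring
    exact (mul_eq_zero.mp h0).resolve_left (ne_of_gt h2α)
  have hQpos : ∀ t : ℝ, 0 < t → t < a →
      0 < (1 - 2 * α) * t ^ 2 + 2 * (α - 1) * c * t + 1 := by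
    intro t ht hta
    have hk := key t
    have hu1 : (2 * α - 1) * t - (α - 1) * c < s := by
      rw [← hua]; nlinarith
    have hu2 : -s < (2 * α - 1) * t - (α - 1) * c := by nlinarith [hslt.1]
    nlinarith
  have hQneg : ∀ t : ℝ, a < t →
      (1 - 2 * α) * t ^ 2 + 2 * (α - 1) * c * t + 1 < 0 := by
    intro t hta
    have hk := key t
    have hu1 : s < (2 * α - 1) * t - (α - 1) * c := by
      rw [← hua]; nlinarith
    nlinarith
  -- the derivative
  set K := -Real.sin (π * α) with hK
  have hKpos : 0 < K := by simp [hK]; linarith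
  set f : ℝ → ℝ := fun t => K * t ^ (1 / α) / (π * (t ^ 2 - 2 * t * c + 1)) with hf
  set D : ℝ → ℝ := fun t => K * t ^ (1 / α - 1) *
      ((1 - 2 * α) * t ^ 2 + 2 * (α - 1) * c * t + 1) * π /
      (α * (π * (t ^ 2 - 2 * t * c + 1)) ^ 2) with hD
  have hderiv : ∀ t : ℝ, 0 < t → HasDerivAt f (D t) t := by
    intro t ht
    have hpow : HasDerivAt (fun x : ℝ => x ^ (1 / α)) ((1 / α) * t ^ (1 / α - 1)) t :=
      Real.hasDerivAt_rpow_const (Or.inl ht.ne')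
    have hN : HasDerivAt (fun x : ℝ => K * x ^ (1 / α)) (K * ((1 / α) * t ^ (1 / α - 1))) t :=
      hpow.const_mul K
    have hq1 : HasDerivAt (fun x : ℝ => x ^ 2 - 2 * x * c + 1) (2 * t - 2 * c) t := by
      have hx : HasDerivAt (fun x : ℝ => x ^ 2) (2 * t) t := by
        simpa using hasDerivAt_pow 2 t
      have hy : HasDerivAt (fun x : ℝ => 2 * x * c) (2 * c) t := by
        have := ((hasDerivAt_id t).const_mul (2:ℝ)).mul_const c
        simpa [mul_comm, mul_assoc] using this
      simpa using (hx.sub hy).add_const 1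
    have hDq : HasDerivAt (fun x : ℝ => π * (x ^ 2 - 2 * x * c + 1))
        (π * (2 * t - 2 * c)) t := hq1.const_mul π
    have hden : π * (t ^ 2 - 2 * t * c + 1) ≠ 0 :=
      ne_of_gt (mul_pos hπ (hq t))
    have hdiv := hN.div hDq hden
    have heq : (K * ((1 / α) * t ^ (1 / α - 1)) * (π * (t ^ 2 - 2 * t * c + 1)) -
        K * t ^ (1 / α) * (π * (2 * t - 2 * c))) / (π * (t ^ 2 - 2 * t * c + 1)) ^ 2
        = D t := by
      rw [hD]
      have hts : t ^ (1 / α) = t ^ (1 / α - 1) * t := by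
        rw [Real.rpow_sub_one ht.ne']
        field_simp
      rw [hts]
      field_simp [hα0.ne', hπ.ne', (hq t).ne']
      ring
    rw [heq] at hdiv
    exact hdiv
  have hDpos : ∀ t : ℝ, 0 < t → t < a → 0 < D t := by
    intro t ht hta
    rw [hD]
    have h3 := hQpos t ht hta
    have h4 := Real.rpow_pos_of_pos ht (1 / α - 1)
    have h5 := hq t
    positivity
  have hDneg : ∀ t : ℝ, 0 < t → a < t → D t < 0 := by
    intro t ht hta
    rw [hD]
    have h3 := hQneg t hta
    have h4 := Real.rpow_pos_of_pos ht (1 / α - 1)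
    have h5 := hq t
    have hnum : K * t ^ (1 / α - 1) *
        ((1 - 2 * α) * t ^ 2 + 2 * (α - 1) * c * t + 1) * π < 0 := by
      have := mul_pos (mul_pos hKpos h4) hπ
      nlinarith
    apply div_neg_of_neg_of_pos hnum
    positivity
  refine ⟨a, ha_pos, ha_root, ?_, ?_, ?_⟩
  · intro t ht hroot
    have hk := key t
    rw [hroot, mul_zero] at hk
    have habs : ((2 * α - 1) * t - (α - 1) * c) ^ 2 = s ^ 2 := by linarith
    have : (2 * α - 1) * t - (α - 1) * c = s ∨ (2 * α - 1) * t - (α - 1) * c = -s := by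
      have := sq_eq_sq_iff_eq_or_eq_neg.mp habs
      tauto
    rcases this with h | h
    · rw [← hua] at h
      have : (2 * α - 1) * t = (2 * α - 1) * a := by linarith
      exact mul_left_cancel₀ (ne_of_gt h2α) this
    · exfalso
      have : (2 * α - 1) * t = (α - 1) * c - s := by linarith
      nlinarith [hslt.1, mul_pos h2α ht]
  · apply strictMonoOn_of_deriv_pos (convex_Ioc 0 a)
    · exact fun t htm => ((hderiv t htm.1).continuousAt).continuousWithinAt
    · intro t htm
      rw [interior_Ioc] at htm
      rw [(hderiv t htm.1).deriv]
      exact hDpos t htm.1 htm.2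
  · apply strictAntiOn_of_deriv_neg (convex_Ici a)
    · exact fun t htm => ((hderiv t (lt_of_lt_of_le ha_pos htm)).continuousAt).continuousWithinAt
    · intro t htm
      rw [interior_Ici] at htm
      rw [(hderiv t (lt_trans ha_pos htm)).deriv]
      exact hDneg t (lt_trans ha_pos htm) htm
end

section
/- For every α ∈ (1,2), the function g_α(t) = log(e^t − 2·cos(πα) + e^{−t}) is convex on ℝ if and only if α ≤ 3/2. (Equivalently, the function t ↦ f_{U_α}(e^t) is log-concave on ℝ if and only if α ≤ 3/2, where f_{U_α}(t) = −sin(πα)·t^{1/α}/(π·(t² − 2t·cos(πα) + 1)).) -/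
open Real Set

lemma h_pos {c : ℝ} (hc : c < 1) (x : ℝ) : 0 < Real.exp x - 2 * c + Real.exp (-x) := by
  have h := Real.one_le_cosh x
  rw [Real.cosh_eq] at h
  linarith

lemma conv_of_nonpos {c : ℝ} (hc1 : c < 1) (hc : c ≤ 0) :
    ConvexOn ℝ Set.univ
      (fun t : ℝ => Real.log (Real.exp t - 2 * c + Real.exp (-t))) := by
  refine ⟨convex_univ, ?_⟩
  intro x _ y _ a b ha hb hab
  simp only [smul_eq_mul]
  set d : ℝ := -(2 * c) with hd
  have hd0 : 0 ≤ d := by simp [hd]; linarith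
  have hrw : ∀ z : ℝ, Real.exp z - 2 * c + Real.exp (-z) = Real.exp z + Real.exp (-z) + d := by
    intro z; simp [hd]; ring
  have hU : (0:ℝ) < Real.exp x + Real.exp (-x) + d := by
    have := h_pos hc1 x; rw [hrw] at this; exact this
  have hV : (0:ℝ) < Real.exp y + Real.exp (-y) + d := by
    have := h_pos hc1 y; rw [hrw] at this; exact this
  set U := Real.exp x + Real.exp (-x) + d
  set V := Real.exp y + Real.exp (-y) + d
  -- key: exp(ax+by) + exp(-(ax+by)) + d ≤ U^a * V^b
  have amgm : ∀ p q : ℝ, 0 ≤ p → 0 ≤ q →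
      p ^ a * q ^ b ≤ a * p + b * q :=
    fun p q hp hq => Real.geom_mean_le_arith_mean2_weighted ha hb hp hq hab
  have h1 : Real.exp (a * x + b * y) = Real.exp x ^ a * Real.exp y ^ b := by
    rw [← Real.exp_mul, ← Real.exp_mul, ← Real.exp_add]; ring_nf
  have h2 : Real.exp (-(a * x + b * y)) = Real.exp (-x) ^ a * Real.exp (-y) ^ b := by
    rw [← Real.exp_mul, ← Real.exp_mul, ← Real.exp_add]; ring_nf
  have h3 : d = d ^ a * d ^ b := by
    rw [← Real.rpow_add' hd0 (by rw [hab]; norm_num), hab, Real.rpow_one]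
  have key : Real.exp (a * x + b * y) + Real.exp (-(a * x + b * y)) + d ≤ U ^ a * V ^ b := by
    have e1 := amgm (Real.exp x / U) (Real.exp y / V) (by positivity) (by positivity)
    have e2 := amgm (Real.exp (-x) / U) (Real.exp (-y) / V) (by positivity) (by positivity)
    have e3 := amgm (d / U) (d / V) (by positivity) (by positivity)
    rw [Real.div_rpow (Real.exp_pos _).le hU.le, Real.div_rpow (Real.exp_pos _).le hV.le] at e1 e2
    rw [Real.div_rpow hd0 hU.le, Real.div_rpow hd0 hV.le] at e3
    have hUa : (0:ℝ) < U ^ a := Real.rpow_pos_of_pos hU a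
    have hVb : (0:ℝ) < V ^ b := Real.rpow_pos_of_pos hV b
    have sum : (Real.exp x ^ a * Real.exp y ^ b + Real.exp (-x) ^ a * Real.exp (-y) ^ b
        + d ^ a * d ^ b) / (U ^ a * V ^ b) ≤ 1 := by
      have expand : (Real.exp x ^ a * Real.exp y ^ b + Real.exp (-x) ^ a * Real.exp (-y) ^ b
          + d ^ a * d ^ b) / (U ^ a * V ^ b)
          = Real.exp x ^ a / U ^ a * (Real.exp y ^ b / V ^ b)
          + Real.exp (-x) ^ a / U ^ a * (Real.exp (-y) ^ b / V ^ b)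
          + d ^ a / U ^ a * (d ^ b / V ^ b) := by
        field_simp
      rw [expand]
      have h4 : Real.exp x / U + Real.exp (-x) / U + d / U = 1 := by
        rw [← add_div, ← add_div, div_self hU.ne']
      have h5 : Real.exp y / V + Real.exp (-y) / V + d / V = 1 := by
        rw [← add_div, ← add_div, div_self hV.ne']
      have sums : a * (Real.exp x / U) + b * (Real.exp y / V)
          + (a * (Real.exp (-x) / U) + b * (Real.exp (-y) / V))
          + (a * (d / U) + b * (d / V)) = 1 := by
        linear_combination a * h4 + b * h5 + hab
      linarith [e1, e2, e3]
    rw [h1, h2, h3]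
    calc Real.exp x ^ a * Real.exp y ^ b + Real.exp (-x) ^ a * Real.exp (-y) ^ b
        + d ^ a * d ^ b
        = ((Real.exp x ^ a * Real.exp y ^ b + Real.exp (-x) ^ a * Real.exp (-y) ^ b
        + d ^ a * d ^ b) / (U ^ a * V ^ b)) * (U ^ a * V ^ b) := by
          field_simp
      _ ≤ 1 * (U ^ a * V ^ b) := by
          apply mul_le_mul_of_nonneg_right sum (by positivity)
      _ = U ^ a * V ^ b := by ring
  rw [hrw, hrw, hrw]
  calc Real.log (Real.exp (a * x + b * y) + Real.exp (-(a * x + b * y)) + d)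
      ≤ Real.log (U ^ a * V ^ b) := by
        apply Real.log_le_log (by positivity) key
    _ = a * Real.log U + b * Real.log V := by
        rw [Real.log_mul (by positivity) (by positivity), Real.log_rpow hU, Real.log_rpow hV]

lemma alg_contra {c a b u v : ℝ} (hc : 0 < c) (hb : 0 < b) (hu : 2 < u) (hv : 0 < v)
    (hab : a * b = 1) (huv : u * v = 1) (hca : c * a = u + v + 2) :
    ¬ ((a - 2 * c + b) ^ 2 ≤ (a * v - 2 * c + b * u) * (a * u - 2 * c + b * v)) := by
  have expand : (a - 2 * c + b) ^ 2 - (a * v - 2 * c + b * u) * (a * u - 2 * c + b * v)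
      = (u + v - 2) * ((u + v + 2) + 2 * c * b) := by
    linear_combination (2 - (u ^ 2 + v ^ 2)) * hab + (2 - a ^ 2 - b ^ 2) * huv
      + (2 * (u + v - 2)) * hca
  have h1 : 0 < u + v - 2 := by linarith
  have h2 : 0 < (u + v + 2) + 2 * c * b := by positivity
  nlinarith [mul_pos h1 h2]

lemma not_conv_of_pos {c : ℝ} (hc1 : c < 1) (hc : 0 < c)
    (H : ConvexOn ℝ Set.univ
      (fun t : ℝ => Real.log (Real.exp t - 2 * c + Real.exp (-t)))) : False := by
  have hu2 : (2:ℝ) < Real.exp 1 := by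
    have := Real.exp_one_gt_d9; linarith
  have hv0 : (0:ℝ) < Real.exp (-1) := Real.exp_pos _
  have hpos : (0:ℝ) < (Real.exp 1 + Real.exp (-1) + 2) / c := by positivity
  obtain ⟨t, ht⟩ : ∃ t : ℝ, Real.exp t = (Real.exp 1 + Real.exp (-1) + 2) / c :=
    ⟨Real.log _, Real.exp_log hpos⟩
  have hab : Real.exp t * Real.exp (-t) = 1 := by rw [← Real.exp_add]; norm_num
  have huv : Real.exp 1 * Real.exp (-1) = 1 := by rw [← Real.exp_add]; norm_num
  have hca : c * Real.exp t = Real.exp 1 + Real.exp (-1) + 2 := by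
    rw [ht]; field_simp
  -- midpoint inequality from convexity
  have key := H.2 (Set.mem_univ (t - 1)) (Set.mem_univ (t + 1))
    (by norm_num : (0:ℝ) ≤ 1/2) (by norm_num : (0:ℝ) ≤ 1/2) (by norm_num)
  simp only [smul_eq_mul] at key
  rw [show (1/2 : ℝ) * (t - 1) + (1/2 : ℝ) * (t + 1) = t by ring] at key
  have hApos := h_pos hc1 (t - 1)
  have hBpos := h_pos hc1 (t + 1)
  have hCpos := h_pos hc1 t
  have key2 : (Real.exp t - 2 * c + Real.exp (-t)) ^ 2
      ≤ (Real.exp (t - 1) - 2 * c + Real.exp (-(t - 1)))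
        * (Real.exp (t + 1) - 2 * c + Real.exp (-(t + 1))) := by
    have hlog : Real.log ((Real.exp t - 2 * c + Real.exp (-t)) ^ 2)
        ≤ Real.log ((Real.exp (t - 1) - 2 * c + Real.exp (-(t - 1)))
          * (Real.exp (t + 1) - 2 * c + Real.exp (-(t + 1)))) := by
      rw [Real.log_pow, Real.log_mul hApos.ne' hBpos.ne']
      push_cast
      linarith [key]
    exact (Real.log_le_log_iff (by positivity) (by positivity)).mp hlog
  have eA : Real.exp (t - 1) - 2 * c + Real.exp (-(t - 1))
      = Real.exp t * Real.exp (-1) - 2 * c + Real.exp (-t) * Real.exp 1 := by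
    rw [show t - 1 = t + (-1) by ring, show -(t + (-1)) = -t + 1 by ring,
      Real.exp_add, Real.exp_add]
  have eB : Real.exp (t + 1) - 2 * c + Real.exp (-(t + 1))
      = Real.exp t * Real.exp 1 - 2 * c + Real.exp (-t) * Real.exp (-1) := by
    rw [show -(t + 1) = -t + (-1) by ring, Real.exp_add, Real.exp_add]
  rw [eA, eB] at key2
  exact alg_contra hc (Real.exp_pos (-t)) hu2 hv0 hab huv hca key2

/-- For every `α ∈ (1,2)`, the function
`g_α(t) = log(e^t − 2cos(πα) + e^{−t})` is convex on `ℝ` if and only if `α ≤ 3/2`. -/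
theorem stmt_17 (α : ℝ) (hα : α ∈ Set.Ioo (1 : ℝ) 2) :
    ConvexOn ℝ Set.univ
        (fun t : ℝ => Real.log (Real.exp t - 2 * Real.cos (π * α) + Real.exp (-t)))
      ↔ α ≤ 3 / 2 := by
  obtain ⟨h1, h2⟩ := hα
  have hπ := Real.pi_pos
  have hc1 : Real.cos (π * α) < 1 := by
    rcases lt_or_ge (Real.cos (π * α)) 1 with h | h
    · exact h
    · exfalso
      have := Real.cos_le_one (π * α)
      have hceq : Real.cos (π * α) = 1 := le_antisymm this h
      obtain ⟨n, hn⟩ := (Real.cos_eq_one_iff (π * α)).mp hceq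
      have h2n : (n : ℝ) * 2 = α := by
        have hπ' : π ≠ 0 := hπ.ne'
        have : ((n : ℝ) * 2 - α) * π = 0 := by linarith [hn]
        rcases mul_eq_zero.mp this with h' | h'
        · linarith
        · exact absurd h' hπ'
      have hn0 : (0 : ℤ) < n := by
        have : (0 : ℝ) < (n : ℝ) := by nlinarith
        exact_mod_cast this
      have hn1 : (1 : ℤ) ≤ n := hn0
      have : (1 : ℝ) ≤ (n : ℝ) := by exact_mod_cast hn1
      nlinarith
  constructor
  · intro H
    by_contra hgt
    push_neg at hgt
    have hcpos : 0 < Real.cos (π * α) := by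
      have : Real.cos (π * α) = Real.cos (2 * π - π * α) := by
        rw [Real.cos_sub, Real.cos_two_pi, Real.sin_two_pi]; ring
      rw [this]
      apply Real.cos_pos_of_mem_Ioo
      constructor <;> nlinarith
    exact absurd H (fun H' => not_conv_of_pos hc1 hcpos H')
  · intro hle
    apply conv_of_nonpos hc1
    apply Real.cos_nonpos_of_pi_div_two_le_of_le <;> nlinarith
end

section
/- For every α ∈ (1, 3/2], the function u ↦ (1/(α−1))·log u − log(u² − 2u·cos(πα) + 1) is concave on (0,∞); that is, u ↦ u^{1/(α−1)}/(u² − 2u·cos(πα) + 1) is log-concave on (0,∞). -/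
open Real Set

/-- For every `α ∈ (1, 3/2]`, the function
`u ↦ (1/(α−1)) log u − log(u² − 2u cos(πα) + 1)` is concave on `(0,∞)`; that is,
`u ↦ u^{1/(α−1)}/(u² − 2u cos(πα) + 1)` is log-concave on `(0,∞)`. -/
theorem stmt_18 (α : ℝ) (hα : α ∈ Set.Ioc (1 : ℝ) (3 / 2)) :
    ConcaveOn ℝ (Set.Ioi 0)
      (fun u : ℝ => (1 / (α - 1)) * Real.log u -
        Real.log (u ^ 2 - 2 * u * Real.cos (π * α) + 1)) := by
  obtain ⟨h1, h2⟩ := hα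
  set a : ℝ := Real.cos (π * α) with ha_def
  set c : ℝ := 1 / (α - 1) with hc_def
  have hsub : (0:ℝ) < α - 1 := by linarith
  have hc2 : (2:ℝ) ≤ c := by
    rw [hc_def, le_div_iff₀ hsub]; linarith
  have ha0 : a ≤ 0 := by
    apply Real.cos_nonpos_of_pi_div_two_le_of_le
    · nlinarith [Real.pi_pos]
    · nlinarith [Real.pi_pos]
  -- positivity of the quadratic
  have hq : ∀ u : ℝ, 0 < u → 1 ≤ u ^ 2 - 2 * u * a + 1 := by
    intro u hu; nlinarith
  have hqpos : ∀ u : ℝ, 0 < u → 0 < u ^ 2 - 2 * u * a + 1 := fun u hu =>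
    lt_of_lt_of_le one_pos (hq u hu)
  have hint : interior (Set.Ioi (0:ℝ)) = Set.Ioi 0 := interior_Ioi
  refine concaveOn_of_hasDerivWithinAt2_nonpos (f' := fun u => c / u -
      (2 * u - 2 * a) / (u ^ 2 - 2 * u * a + 1))
    (f'' := fun u => -c / u ^ 2 -
      (2 * (u ^ 2 - 2 * u * a + 1) - (2 * u - 2 * a) ^ 2) / (u ^ 2 - 2 * u * a + 1) ^ 2)
    (convex_Ioi 0) ?_ ?_ ?_ ?_
  · -- continuity
    apply ContinuousOn.sub
    · exact (continuousOn_const.mul (Real.continuousOn_log.mono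
        (fun x hx => ne_of_gt hx)))
    · apply ContinuousOn.log
      · fun_prop
      · intro x hx; exact ne_of_gt (hqpos x hx)
  · -- first derivative
    rw [hint]
    intro u hu
    have hu' : (0:ℝ) < u := hu
    have hd1 : HasDerivAt (fun u : ℝ => c * Real.log u) (c / u) u := by
      have := (Real.hasDerivAt_log (ne_of_gt hu')).const_mul c
      simpa [div_eq_mul_inv] using this
    have hdq : HasDerivAt (fun u : ℝ => u ^ 2 - 2 * u * a + 1) (2 * u - 2 * a) u := by
      have h1 : HasDerivAt (fun u : ℝ => u ^ 2) (2 * u) u := by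
        simpa using (hasDerivAt_pow 2 u)
      have h2 : HasDerivAt (fun u : ℝ => 2 * u * a) (2 * a) u := by
        have := (hasDerivAt_mul_const (x := u) a).const_mul (2:ℝ)
        simpa [mul_assoc] using this
      simpa using (h1.sub h2).add_const 1
    have hd2 : HasDerivAt (fun u : ℝ => Real.log (u ^ 2 - 2 * u * a + 1))
        ((2 * u - 2 * a) / (u ^ 2 - 2 * u * a + 1)) u := by
      simpa [div_eq_mul_inv, mul_comm] using hdq.log (ne_of_gt (hqpos u hu'))
    have h1 : (1 / (α - 1)) = c := rfl
    exact ((hd1.sub hd2).hasDerivWithinAt)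
  · -- second derivative
    rw [hint]
    intro u hu
    have hu' : (0:ℝ) < u := hu
    have hqne : (u ^ 2 - 2 * u * a + 1) ≠ 0 := ne_of_gt (hqpos u hu')
    have hd1 : HasDerivAt (fun u : ℝ => c / u) (-c / u ^ 2) u := by
      simp only [div_eq_mul_inv]
      have := (hasDerivAt_inv (ne_of_gt hu')).const_mul c
      exact this.congr_deriv (by ring)
    have hdq : HasDerivAt (fun u : ℝ => u ^ 2 - 2 * u * a + 1) (2 * u - 2 * a) u := by
      have h1 : HasDerivAt (fun u : ℝ => u ^ 2) (2 * u) u := by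
        simpa using (hasDerivAt_pow 2 u)
      have h2 : HasDerivAt (fun u : ℝ => 2 * u * a) (2 * a) u := by
        have := (hasDerivAt_mul_const (x := u) a).const_mul (2:ℝ)
        simpa [mul_assoc] using this
      simpa using (h1.sub h2).add_const 1
    have hdn : HasDerivAt (fun u : ℝ => 2 * u - 2 * a) 2 u := by
      have := ((hasDerivAt_id u).const_mul 2).sub_const (2 * a)
      simpa using this
    have hd2 : HasDerivAt (fun u : ℝ => (2 * u - 2 * a) / (u ^ 2 - 2 * u * a + 1))
        ((2 * (u ^ 2 - 2 * u * a + 1) - (2 * u - 2 * a) ^ 2) / (u ^ 2 - 2 * u * a + 1) ^ 2) u := by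
      have := hdn.div hdq hqne
      refine this.congr_deriv ?_
      field_simp
    exact ((hd1.sub hd2).hasDerivWithinAt)
  · -- nonpositivity
    rw [hint]
    intro u hu
    have hu' : (0:ℝ) < u := hu
    have hq1 : 1 ≤ u ^ 2 - 2 * u * a + 1 := hq u hu'
    have hqpos' : 0 < u ^ 2 - 2 * u * a + 1 := hqpos u hu'
    have key : -c / u ^ 2 - (2 * (u ^ 2 - 2 * u * a + 1) - (2 * u - 2 * a) ^ 2) /
        (u ^ 2 - 2 * u * a + 1) ^ 2 =
        -(c * (u ^ 2 - 2 * u * a + 1) ^ 2 +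
          u ^ 2 * (2 * (u ^ 2 - 2 * u * a + 1) - (2 * u - 2 * a) ^ 2)) /
        (u ^ 2 * (u ^ 2 - 2 * u * a + 1) ^ 2) := by
      rw [div_sub_div _ _ (pow_ne_zero 2 hu'.ne') (pow_ne_zero 2 hqpos'.ne'),
        div_eq_div_iff (mul_ne_zero (pow_ne_zero 2 hu'.ne') (pow_ne_zero 2 hqpos'.ne'))
          (mul_ne_zero (pow_ne_zero 2 hu'.ne') (pow_ne_zero 2 hqpos'.ne'))]
      ring
    rw [key]
    apply div_nonpos_of_nonpos_of_nonneg
    · nlinarith [sq_nonneg (u ^ 2 - 2 * u * a + 1), sq_nonneg u, sq_nonneg a, sq_nonneg (a * u),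
        mul_nonneg (neg_nonneg.mpr ha0) (le_of_lt hu'),
        mul_nonneg (mul_nonneg (neg_nonneg.mpr ha0) (le_of_lt hu')) (sq_nonneg u)]
    · positivity
end

section
/- For every α ∈ (1,2), there exists a unique a > 0 at which the function t ↦ (1−2α)t² − 2α·t^{2−1/α} + 2(α−1)·cos(πα)·t + 2α·cos(πα)·t^{1−1/α} + 1 vanishes, and the function f_{T_α} is strictly increasing on (0,a] and strictly decreasing on [a,∞); in particular f_{T_α} is unimodal with mode a. -/
open Real Set

noncomputable def gf (α c t : ℝ) : ℝ :=
  (1 - 2 * α) * t ^ 2 - 2 * α * t ^ (2 - 1 / α) +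
    2 * (α - 1) * c * t + 2 * α * c * t ^ (1 - 1 / α) + 1

lemma gf_zero {α c : ℝ} (hα1 : 1 < α) : gf α c 0 = 1 := by
  have h1 : (2 - 1 / α) ≠ 0 := by
    have : 1 / α < 1 := by rw [div_lt_one (by linarith)]; linarith
    intro h; nlinarith
  have h2 : (1 - 1 / α) ≠ 0 := by
    have : 1 / α < 1 := by rw [div_lt_one (by linarith)]; linarith
    intro h; nlinarith
  unfold gf
  rw [Real.zero_rpow h1, Real.zero_rpow h2]
  norm_num

lemma gf_hasDeriv {α c : ℝ} (hα1 : 1 < α) {t : ℝ} (ht : 0 < t) :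
    HasDerivAt (gf α c)
      (2 * (1 + t ^ (-(1 / α))) * ((α - 1) * c - (2 * α - 1) * t)) t := by
  have hαpos : (0:ℝ) < α := by linarith
  have h1 : HasDerivAt (fun t : ℝ => t ^ 2) (2 * t) t := by
    simpa using hasDerivAt_pow 2 t
  have h2 : HasDerivAt (fun t : ℝ => t ^ (2 - 1 / α))
      ((2 - 1 / α) * t ^ (1 - 1 / α)) t := by
    have := Real.hasDerivAt_rpow_const (p := 2 - 1 / α) (Or.inl ht.ne')
    convert this using 2; ring_nf
  have h3 : HasDerivAt (fun t : ℝ => t ^ (1 - 1 / α))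
      ((1 - 1 / α) * t ^ (-(1 / α))) t := by
    have := Real.hasDerivAt_rpow_const (p := 1 - 1 / α) (Or.inl ht.ne')
    convert this using 2; ring_nf
  have hu : t ^ (1 - 1 / α) = t * t ^ (-(1 / α)) := by
    rw [show (1 - 1 / α) = 1 + -(1 / α) by ring, Real.rpow_add ht, Real.rpow_one]
  have H := ((((h1.const_mul (1 - 2 * α)).sub (h2.const_mul (2 * α))).add
      ((hasDerivAt_id t).const_mul (2 * (α - 1) * c))).add
      (h3.const_mul (2 * α * c))).add_const 1
  refine H.congr_deriv (Eq.symm ?_)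
  rw [hu]
  field_simp
  ring

lemma gf_contOn {α c : ℝ} (hα1 : 1 < α) : ContinuousOn (gf α c) (Ici 0) := by
  have hp : ∀ p : ℝ, 0 < p → ContinuousOn (fun t : ℝ => t ^ p) (Ici 0) := by
    intro p hp x _
    exact (Real.continuousAt_rpow_const x p (Or.inr hp.le)).continuousWithinAt
  have h1 : (0:ℝ) < 2 - 1 / α := by
    have : 1 / α < 1 := by rw [div_lt_one (by linarith)]; linarith
    linarith
  have h2 : (0:ℝ) < 1 - 1 / α := by
    have : 1 / α < 1 := by rw [div_lt_one (by linarith)]; linarith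
    linarith
  unfold gf
  exact ((((continuousOn_const.mul (continuousOn_pow 2)).sub
    (continuousOn_const.mul (hp _ h1))).add
    (continuousOn_const.mul continuousOn_id)).add
    (continuousOn_const.mul (hp _ h2))).add continuousOn_const
  
/-- For every `α ∈ (1,2)`, there exists a unique `a > 0` at which
`t ↦ (1−2α)t² − 2α t^{2−1/α} + 2(α−1)cos(πα)t + 2α cos(πα) t^{1−1/α} + 1`
vanishes, and `f_{T_α}(t) = −sin(πα)(1 + t^{1/α})/(πα(t² − 2t cos(πα) + 1))` is
strictly increasing on `(0,a]` and strictly decreasing on `[a,∞)`; in particular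
`f_{T_α}` is unimodal with mode `a`. -/
theorem stmt_19 (α : ℝ) (hα : α ∈ Set.Ioo (1 : ℝ) 2) :
    ∃ a : ℝ, 0 < a ∧
      (1 - 2 * α) * a ^ 2 - 2 * α * a ^ (2 - 1 / α) +
          2 * (α - 1) * Real.cos (π * α) * a +
          2 * α * Real.cos (π * α) * a ^ (1 - 1 / α) + 1 = 0 ∧
      (∀ t : ℝ, 0 < t →
        (1 - 2 * α) * t ^ 2 - 2 * α * t ^ (2 - 1 / α) +
            2 * (α - 1) * Real.cos (π * α) * t +
            2 * α * Real.cos (π * α) * t ^ (1 - 1 / α) + 1 = 0 → t = a) ∧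
      StrictMonoOn
        (fun t : ℝ => -Real.sin (π * α) * (1 + t ^ (1 / α)) /
          (π * α * (t ^ 2 - 2 * t * Real.cos (π * α) + 1))) (Set.Ioc 0 a) ∧
      StrictAntiOn
        (fun t : ℝ => -Real.sin (π * α) * (1 + t ^ (1 / α)) /
          (π * α * (t ^ 2 - 2 * t * Real.cos (π * α) + 1))) (Set.Ici a) := by
  obtain ⟨hα1, hα2⟩ := hα
  have hαpos : (0:ℝ) < α := by linarith
  have hπ : (0:ℝ) < π := Real.pi_pos
  set c := Real.cos (π * α) with hcdef
  -- sin (π α) < 0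
  have hsin : Real.sin (π * α) < 0 := by
    have h : Real.sin (π * (α - 1) + π) = -Real.sin (π * (α - 1)) := Real.sin_add_pi _
    have h2 : Real.sin (π * (α - 1)) > 0 :=
      Real.sin_pos_of_pos_of_lt_pi (by nlinarith) (by nlinarith)
    have h3 : π * α = π * (α - 1) + π := by ring
    rw [h3, h]; linarith
  have hc2 : c ^ 2 < 1 := by
    have := Real.sin_sq_add_cos_sq (π * α)
    nlinarith
  have hc1 : c < 1 := by nlinarith
  have hcm1 : -1 < c := by nlinarith
  have hq : ∀ t : ℝ, 0 < t ^ 2 - 2 * t * c + 1 := by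
    intro t; nlinarith [sq_nonneg (t - c)]
  set g := gf α c with hgdef
  set t₀ : ℝ := max 0 ((α - 1) * c / (2 * α - 1)) with ht₀def
  have h2α1 : (1:ℝ) < 2 * α - 1 := by linarith
  have ht₀0 : 0 ≤ t₀ := le_max_left _ _
  have ht₀lt1 : t₀ < 1 := by
    apply max_lt one_pos
    rw [div_lt_one (by linarith)]
    nlinarith
  -- strict anti of g on [t₀, ∞)
  have hganti : StrictAntiOn g (Ici t₀) := by
    apply strictAntiOn_of_deriv_neg (convex_Ici _)
      ((gf_contOn hα1).mono (fun x hx => le_trans ht₀0 hx))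
    intro x hx
    rw [interior_Ici] at hx
    have hx0 : 0 < x := lt_of_le_of_lt ht₀0 hx
    rw [(gf_hasDeriv hα1 hx0).deriv]
    have h1 : 0 < 1 + x ^ (-(1 / α)) := by positivity
    have h2 : (α - 1) * c - (2 * α - 1) * x < 0 := by
      have : (α - 1) * c / (2 * α - 1) < x := lt_of_le_of_lt (le_max_right _ _) hx
      rw [div_lt_iff₀ (by linarith)] at this
      nlinarith
    nlinarith
  -- strict mono of g on [0, t₀]
  have hgmono : StrictMonoOn g (Icc 0 t₀) := by
    apply strictMonoOn_of_deriv_pos (convex_Icc _ _)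
      ((gf_contOn hα1).mono (fun x hx => hx.1))
    intro x hx
    rw [interior_Icc] at hx
    have hx0 : 0 < x := hx.1
    rw [(gf_hasDeriv hα1 hx0).deriv]
    have h1 : 0 < 1 + x ^ (-(1 / α)) := by positivity
    have h2 : 0 < (α - 1) * c - (2 * α - 1) * x := by
      have hxt : x < (α - 1) * c / (2 * α - 1) := by
        rcases max_cases 0 ((α - 1) * c / (2 * α - 1)) with ⟨h, _⟩ | ⟨h, _⟩
        · exact absurd (hx.2.trans_le (le_of_eq (ht₀def ▸ h))) (not_lt.2 hx0.le)
        · exact hx.2.trans_le (le_of_eq (ht₀def ▸ h))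
      rw [lt_div_iff₀ (by linarith)] at hxt
      nlinarith
    nlinarith
  have hg0 : g 0 = 1 := gf_zero hα1
  have hgt₀ : 0 < g t₀ := by
    rcases eq_or_lt_of_le ht₀0 with h | h
    · rw [← h, hg0]; norm_num
    · have := hgmono ⟨le_rfl, ht₀0⟩ ⟨ht₀0, le_rfl⟩ h
      rw [hg0] at this; linarith
  have hg7 : g 7 < 0 := by
    have hb1 : (0:ℝ) < (7:ℝ) ^ (2 - 1 / α) := Real.rpow_pos_of_pos (by norm_num) _
    have hb2 : (7:ℝ) ^ (1 - 1 / α) ≤ 7 := by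
      calc (7:ℝ) ^ (1 - 1 / α) ≤ (7:ℝ) ^ (1:ℝ) := by
            apply Real.rpow_le_rpow_of_exponent_le (by norm_num)
            have : 0 < 1 / α := by positivity
            linarith
        _ = 7 := Real.rpow_one 7
    have hb3 : (0:ℝ) < (7:ℝ) ^ (1 - 1 / α) := Real.rpow_pos_of_pos (by norm_num) _
    have : g 7 = (1 - 2 * α) * 49 - 2 * α * (7:ℝ) ^ (2 - 1 / α) +
        2 * (α - 1) * c * 7 + 2 * α * c * (7:ℝ) ^ (1 - 1 / α) + 1 := by
      rw [hgdef]; unfold gf; norm_num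
    rw [this]
    nlinarith [mul_pos hαpos hb1, mul_le_of_le_one_left (le_of_lt hb3) (le_of_lt hc1)]
  -- existence of root via IVT
  have ht₀7 : t₀ ≤ 7 := by linarith
  have hIVT := intermediate_value_Ioo' (f := g) ht₀7
    ((gf_contOn hα1).mono (fun x hx => le_trans ht₀0 hx.1))
  obtain ⟨a, ⟨hat₀, ha7⟩, hga⟩ := hIVT ⟨hg7, hgt₀⟩
  have ha0 : 0 < a := lt_of_le_of_lt ht₀0 hat₀
  -- g positive on (0,a), negative on (a,∞)
  have hgpos : ∀ t : ℝ, 0 < t → t < a → 0 < g t := by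
    intro t ht hta
    rcases le_or_gt t t₀ with h | h
    · have := hgmono ⟨le_rfl, ht₀0⟩ ⟨ht.le, h⟩ ht
      rw [hg0] at this; linarith
    · have := hganti h.le hat₀.le hta
      rw [hga] at this; exact this
  have hgneg : ∀ t : ℝ, a < t → g t < 0 := by
    intro t hta
    have := hganti hat₀.le (le_trans hat₀.le hta.le) hta
    rw [hga] at this; exact this
  -- derivative of f
  have hfderiv : ∀ t : ℝ, 0 < t →
      HasDerivAt (fun t : ℝ => -Real.sin (π * α) * (1 + t ^ (1 / α)) /
          (π * α * (t ^ 2 - 2 * t * c + 1)))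
        (-Real.sin (π * α) * π * t ^ (1 / α - 1) * g t /
          (π * α * (t ^ 2 - 2 * t * c + 1)) ^ 2) t := by
    intro t ht
    have hnum : HasDerivAt (fun t : ℝ => -Real.sin (π * α) * (1 + t ^ (1 / α)))
        (-Real.sin (π * α) * (1 / α * t ^ (1 / α - 1))) t :=
      (((Real.hasDerivAt_rpow_const (p := 1 / α) (Or.inl ht.ne')).const_add 1).const_mul _)
    have hden : HasDerivAt (fun t : ℝ => π * α * (t ^ 2 - 2 * t * c + 1))
        (π * α * (2 * t - 2 * c)) t := by
      have h1 : HasDerivAt (fun t : ℝ => t ^ 2 - 2 * t * c + 1) (2 * t - 2 * c) t := by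
        have := ((hasDerivAt_pow 2 t).sub
          (((hasDerivAt_id t).const_mul 2).mul_const c)).add_const 1
        refine this.congr_deriv (Eq.symm ?_); push_cast; ring
      exact h1.const_mul _
    have hdne : π * α * (t ^ 2 - 2 * t * c + 1) ≠ 0 := by
      have := hq t; positivity
    have H := hnum.div hden hdne
    refine H.congr_deriv (Eq.symm ?_)
    have hRt : t ^ (1 / α - 1) * t = t ^ (1 / α) := by
      rw [← Real.rpow_add_one ht.ne']; ring_nf
    have hRU : t ^ (1 / α - 1) * t ^ (1 - 1 / α) = 1 := by
      rw [← Real.rpow_add ht]; norm_num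
    have hV : t ^ (2 - 1 / α) = t * t ^ (1 - 1 / α) := by
      rw [show (2 - 1 / α : ℝ) = (1 - 1 / α) + 1 by ring, Real.rpow_add_one ht.ne']
      ring
    congr 1
    rw [hgdef]; unfold gf
    rw [hV, ← hRt]
    have hainv : α * α⁻¹ = 1 := mul_inv_cancel₀ (by linarith)
    linear_combination (2 * α * Real.sin (π * α) * π * (t - c)) * hRU +
      (Real.sin (π * α) * π * t ^ (1 / α - 1) * (t ^ 2 - 2 * t * c + 1)) * hainv
  have hderivpos : ∀ t : ℝ, 0 < t → 0 < g t →
      0 < -Real.sin (π * α) * π * t ^ (1 / α - 1) * g t /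
          (π * α * (t ^ 2 - 2 * t * c + 1)) ^ 2 := by
    intro t ht hgt
    have h1 : 0 < -Real.sin (π * α) := by linarith
    have h2 : 0 < t ^ (1 / α - 1) := Real.rpow_pos_of_pos ht _
    have h3 := hq t
    positivity
  have hderivneg : ∀ t : ℝ, 0 < t → g t < 0 →
      -Real.sin (π * α) * π * t ^ (1 / α - 1) * g t /
          (π * α * (t ^ 2 - 2 * t * c + 1)) ^ 2 < 0 := by
    intro t ht hgt
    have h1 : 0 < -Real.sin (π * α) := by linarith
    have h2 : 0 < t ^ (1 / α - 1) := Real.rpow_pos_of_pos ht _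
    have h3 := hq t
    have h4 : 0 < (π * α * (t ^ 2 - 2 * t * c + 1)) ^ 2 := by positivity
    apply div_neg_of_neg_of_pos _ h4
    have h5 : 0 < -Real.sin (π * α) * π * t ^ (1 / α - 1) := mul_pos (mul_pos h1 hπ) h2
    exact mul_neg_of_pos_of_neg h5 hgt
  refine ⟨a, ha0, hga, ?_, ?_, ?_⟩
  · -- uniqueness
    intro t ht h0
    by_contra hne
    rcases lt_or_gt_of_ne hne with h | h
    · exact absurd h0 (ne_of_gt (hgpos t ht h))
    · exact absurd h0 (ne_of_lt (hgneg t h))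
  · -- strict mono on Ioc 0 a
    apply strictMonoOn_of_deriv_pos (convex_Ioc _ _)
    · intro x hx
      exact (hfderiv x hx.1).continuousAt.continuousWithinAt
    · intro x hx
      rw [interior_Ioc] at hx
      rw [(hfderiv x hx.1).deriv]
      exact hderivpos x hx.1 (hgpos x hx.1 hx.2)
  · -- strict anti on Ici a
    apply strictAntiOn_of_deriv_neg (convex_Ici _)
    · intro x hx
      exact (hfderiv x (lt_of_lt_of_le ha0 hx)).continuousAt.continuousWithinAt
    · intro x hx
      rw [interior_Ici] at hx
      rw [(hfderiv x (lt_trans ha0 hx)).deriv]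
      exact hderivneg x (lt_trans ha0 hx) (hgneg x hx)
end
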